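/- arXiv:1502.06464 — 2 statements merged into one kernel-verified Lean document; each statement's English description precedes it below -/
import Mathlib

section
/- Fix j and vectors μ_1,...,μ_n ∈ ℝ (the j-th components of n vectors). Suppose at least one (μ_p)_{ij} > 0 for i = 1,...,n. Then the minimizer of (1/n)Σ_i (μ_i - (μ_p)_i)² subject to μ_i ≥ 0 for all i and (1/n)Σ_i μ_i² = 1 is μ_i = m̂_i / sqrt((1/n)Σ_s m̂_s²) where m̂_i = max(0, (μ_p)_i). -/
open Finset

/-- Rectifying-and-normalizing projection (scalar/component version). -/
theorem stmt1 (n : ℕ) (hn : 0 < n) (μp : Fin n → ℝ) (hpos : ∃ i, 0 < μp i)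
    (μstar : Fin n → ℝ)
    (hdef : ∀ i, μstar i =
      max 0 (μp i) / Real.sqrt ((1 / (n : ℝ)) * ∑ s, (max 0 (μp s)) ^ 2)) :
    ((∀ i, 0 ≤ μstar i) ∧ (1 / (n : ℝ)) * ∑ i, (μstar i) ^ 2 = 1) ∧
    ∀ μ : Fin n → ℝ, (∀ i, 0 ≤ μ i) → (1 / (n : ℝ)) * ∑ i, (μ i) ^ 2 = 1 →
      (1 / (n : ℝ)) * ∑ i, (μstar i - μp i) ^ 2 ≤
        (1 / (n : ℝ)) * ∑ i, (μ i - μp i) ^ 2 := by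
  obtain ⟨i₀, hi₀⟩ := hpos
  have hnpos : (0:ℝ) < n := Nat.cast_pos.mpr hn
  have hT : 0 < ∑ s, (max 0 (μp s)) ^ 2 := by
    apply Finset.sum_pos' (fun s _ => sq_nonneg _) ⟨i₀, Finset.mem_univ _, ?_⟩
    have h : 0 < max 0 (μp i₀) := lt_of_lt_of_le hi₀ (le_max_right _ _)
    positivity
  set T := ∑ s, (max 0 (μp s)) ^ 2 with hTdef
  have hS : 0 < (1 / (n:ℝ)) * T := by positivity
  have hsS : 0 < Real.sqrt ((1 / (n:ℝ)) * T) := Real.sqrt_pos.mpr hS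
  have hstar2 : ∀ i, μstar i ^ 2 = (max 0 (μp i)) ^ 2 / ((1 / (n:ℝ)) * T) := by
    intro i; rw [hdef i, div_pow, Real.sq_sqrt hS.le]
  have hsum : ∑ i, μstar i ^ 2 = (n:ℝ) := by
    simp only [hstar2]
    rw [← Finset.sum_div, ← hTdef, div_eq_iff hS.ne']
    field_simp
  have hfeas1 : ∀ i, 0 ≤ μstar i := by
    intro i; rw [hdef i]
    exact div_nonneg (le_max_left _ _) (Real.sqrt_nonneg _)
  have hfeas2 : (1 / (n : ℝ)) * ∑ i, (μstar i) ^ 2 = 1 := by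
    rw [hsum]; field_simp
  refine ⟨⟨hfeas1, hfeas2⟩, ?_⟩
  intro μ hμnn hμsum
  have hμsum' : ∑ i, μ i ^ 2 = (n:ℝ) := by
    have := hμsum
    field_simp at this
    linarith
  -- sqrt S = sqrt T / sqrt n
  have hsqrtS : Real.sqrt ((1 / (n:ℝ)) * T) = Real.sqrt T / Real.sqrt n := by
    rw [one_div, inv_mul_eq_div, Real.sqrt_div hT.le]
  -- μstar dot μp = sqrt n * sqrt T
  have hstar_dot : ∑ i, μstar i * μp i = Real.sqrt n * Real.sqrt T := by
    have h1 : ∀ i, μstar i * μp i = (max 0 (μp i)) ^ 2 / Real.sqrt ((1 / (n:ℝ)) * T) := by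
      intro i
      rw [hdef i, div_mul_eq_mul_div]
      congr 1
      rcases le_or_gt (μp i) 0 with h | h
      · simp [max_eq_left h]
      · rw [max_eq_right h.le]; ring
    simp only [h1]
    rw [← Finset.sum_div, ← hTdef, hsqrtS, div_div_eq_mul_div, div_eq_iff]
    · rw [mul_assoc, Real.mul_self_sqrt hT.le]; ring
    · exact (Real.sqrt_pos.mpr hT).ne'
  -- μ dot μp ≤ sqrt n * sqrt T
  have hdot_le : ∑ i, μ i * μp i ≤ Real.sqrt n * Real.sqrt T := by
    have step1 : ∑ i, μ i * μp i ≤ ∑ i, μ i * max 0 (μp i) := by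
      apply Finset.sum_le_sum
      intro i _
      exact mul_le_mul_of_nonneg_left (le_max_right _ _) (hμnn i)
    have step2 : ∑ i, μ i * max 0 (μp i) ≤
        Real.sqrt (∑ i, μ i ^ 2) * Real.sqrt (∑ i, (max 0 (μp i)) ^ 2) := by
      exact Real.sum_mul_le_sqrt_mul_sqrt Finset.univ _ _
    rw [hμsum', ← hTdef] at step2
    linarith
  have key : ∑ i, μ i * μp i ≤ ∑ i, μstar i * μp i := by
    rw [hstar_dot]; exact hdot_le
  have expand : ∀ f : Fin n → ℝ, ∑ i, (f i - μp i) ^ 2 =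
      ∑ i, f i ^ 2 - 2 * ∑ i, f i * μp i + ∑ i, μp i ^ 2 := by
    intro f
    have h : ∀ i, (f i - μp i) ^ 2 = f i ^ 2 - 2 * (f i * μp i) + μp i ^ 2 :=
      fun i => by ring
    simp only [h, Finset.sum_add_distrib, Finset.sum_sub_distrib, ← Finset.mul_sum]
  rw [expand μstar, expand μ, hsum, hμsum']
  have h1n : (0:ℝ) ≤ 1 / (n:ℝ) := by positivity
  apply mul_le_mul_of_nonneg_left _ h1n
  linarith
end

section
/- Let W ∈ ℝ^{m×l}, Ψ symmetric positive definite, Σ = (I + Wᵀ Ψ⁻¹ W)⁻¹, and suppose ε_i = v_i − W μ_i satisfy (1/n)Σ_i ε_i ε_iᵀ + W Σ Wᵀ = Ψ. Then (1/n)Σ_i ‖ε_i‖² = tr(Ψ (W Wᵀ + Ψ)⁻¹ Ψ) ≤ tr((W Wᵀ + Ψ)⁻¹) · tr(Ψ)². -/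
/-!
Eliminating `W Σ Wᵀ` from the fixed-point equation with the Woodbury identity
`W (I + Wᵀ Ψ⁻¹ W)⁻¹ Wᵀ = Ψ - Ψ (W Wᵀ + Ψ)⁻¹ Ψ` leaves the empirical error covariance equal to
`Ψ (W Wᵀ + Ψ)⁻¹ Ψ`, whose trace is the mean squared error. For the bound, write positive
semidefinite matrices as `A = Dᵀ D`, `B = Cᵀ C`; then `tr (A B) = ‖C Dᵀ‖²` in the Frobenius norm,
and submultiplicativity of that norm gives `tr (A B) ≤ tr A · tr B`, applied twice to
`tr (Ψ (W Wᵀ + Ψ)⁻¹ Ψ) = tr ((W Wᵀ + Ψ)⁻¹ (Ψ Ψ))`.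
-/

open Matrix Finset

namespace Matrix

variable {m n l : Type*} [Fintype m] [Fintype n] [Fintype l]

open scoped MatrixOrder in
lemma PosSemidef.exists_eq_transpose_mul_self {A : Matrix n n ℝ} (hA : A.PosSemidef) :
    ∃ D : Matrix n n ℝ, A = Dᵀ * D := by
  classical
  refine ⟨CFC.sqrt A, ?_⟩
  rw [← conjTranspose_eq_transpose_of_trivial, ← star_eq_conjTranspose,
    (CFC.sqrt_nonneg A).isSelfAdjoint.star_eq, CFC.sqrt_mul_sqrt_self A hA.nonneg]

section Frobenius

attribute [local instance] frobeniusSeminormedAddCommGroup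

lemma trace_transpose_mul_self_eq_frobenius_norm_sq (M : Matrix m n ℝ) :
    (Mᵀ * M).trace = ‖M‖ ^ 2 := by
  rw [frobenius_norm_def, ← Real.sqrt_eq_rpow, Real.sq_sqrt (by positivity), Finset.sum_comm]
  simp [trace, mul_apply, sq]

theorem PosSemidef.trace_mul_le_trace_mul_trace {A B : Matrix n n ℝ} (hA : A.PosSemidef)
    (hB : B.PosSemidef) : (A * B).trace ≤ A.trace * B.trace := by
  obtain ⟨D, rfl⟩ := hA.exists_eq_transpose_mul_self
  obtain ⟨C, rfl⟩ := hB.exists_eq_transpose_mul_self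
  have hcycle : (Dᵀ * D * (Cᵀ * C)).trace = ((C * Dᵀ)ᵀ * (C * Dᵀ)).trace := by
    simp only [transpose_mul, transpose_transpose, Matrix.mul_assoc]
    rw [trace_mul_comm]
    simp only [Matrix.mul_assoc]
  rw [hcycle]
  simp only [trace_transpose_mul_self_eq_frobenius_norm_sq]
  rw [mul_comm, ← mul_pow]
  gcongr
  exact (frobenius_norm_mul C Dᵀ).trans_eq (by rw [frobenius_norm_transpose])

end Frobenius

theorem mul_inv_one_add_mul_inv_mul_mul_eq_sub {α : Type*} [CommRing α] [DecidableEq m]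
    [DecidableEq l] (Ψ : Matrix m m α) (U : Matrix m l α) (V : Matrix l m α) (hΨ : IsUnit Ψ)
    (h : IsUnit (1 + V * Ψ⁻¹ * U)) :
    U * (1 + V * Ψ⁻¹ * U)⁻¹ * V = Ψ - Ψ * (U * V + Ψ)⁻¹ * Ψ := by
  have hwood := add_mul_mul_inv_eq_sub Ψ U 1 V hΨ isUnit_one (by rwa [inv_one])
  rw [Matrix.mul_one, inv_one, add_comm] at hwood
  have hdet := (isUnit_iff_isUnit_det Ψ).1 hΨ
  rw [hwood]
  simp only [Matrix.mul_sub, Matrix.sub_mul, Matrix.mul_assoc, mul_nonsing_inv_cancel_left _ _ hdet,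
    nonsing_inv_mul _ hdet, Matrix.mul_one, sub_sub_cancel]

lemma trace_smul_sum_vecMulVec_self {ι : Type*} [Fintype ι] (c : ℝ) (x : ι → n → ℝ) :
    (c • ∑ i, vecMulVec (x i) (x i)).trace = c * ∑ i, ∑ k, x i k ^ 2 := by
  simp [trace_sum, dotProduct, sq]

end Matrix

theorem stmt12_general (m l n : ℕ)
    (W : Matrix (Fin m) (Fin l) ℝ)
    (Ψ : Matrix (Fin m) (Fin m) ℝ) (hΨ : Ψ.PosDef)
    (Sig : Matrix (Fin l) (Fin l) ℝ)
    (hSig : Sig = ((1 : Matrix (Fin l) (Fin l) ℝ) + Wᵀ * Ψ⁻¹ * W)⁻¹)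
    (ε : Fin n → Fin m → ℝ)
    (hfix : (1 / (n : ℝ)) • ∑ i, Matrix.vecMulVec (ε i) (ε i) + W * Sig * Wᵀ = Ψ) :
    (1 / (n : ℝ)) * ∑ i, ∑ k, (ε i k) ^ 2 =
        (Ψ * (W * Wᵀ + Ψ)⁻¹ * Ψ).trace ∧
    (Ψ * (W * Wᵀ + Ψ)⁻¹ * Ψ).trace ≤ ((W * Wᵀ + Ψ)⁻¹).trace * Ψ.trace ^ 2 := by
  have hWWt : (W * Wᵀ).PosSemidef := by
    simpa using posSemidef_self_mul_conjTranspose W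
  have hS : (1 + Wᵀ * Ψ⁻¹ * W).PosDef := by
    simpa using PosDef.one.add_posSemidef (hΨ.inv.posSemidef.conjTranspose_mul_mul_same W)
  have hWood : W * Sig * Wᵀ = Ψ - Ψ * (W * Wᵀ + Ψ)⁻¹ * Ψ := by
    rw [hSig]
    exact mul_inv_one_add_mul_inv_mul_mul_eq_sub Ψ W Wᵀ hΨ.isUnit hS.isUnit
  have hInv : ((W * Wᵀ + Ψ)⁻¹).PosSemidef := (PosDef.posSemidef_add hWWt hΨ).inv.posSemidef
  refine ⟨?_, ?_⟩
  · rw [← trace_smul_sum_vecMulVec_self, eq_sub_of_add_eq hfix, hWood, sub_sub_cancel]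
  · calc (Ψ * (W * Wᵀ + Ψ)⁻¹ * Ψ).trace = ((W * Wᵀ + Ψ)⁻¹ * (Ψ * Ψ)).trace := by
          rw [trace_mul_cycle, trace_mul_comm]
      _ ≤ ((W * Wᵀ + Ψ)⁻¹).trace * (Ψ * Ψ).trace :=
          hInv.trace_mul_le_trace_mul_trace (by simpa [sq] using hΨ.posSemidef.pow 2)
      _ ≤ ((W * Wᵀ + Ψ)⁻¹).trace * Ψ.trace ^ 2 := by
          rw [sq]
          gcongr
          · exact hInv.trace_nonneg
          · exact hΨ.posSemidef.trace_mul_le_trace_mul_trace hΨ.posSemidef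

/-- The reconstruction error is quadratic in `Ψ`:
`(1/n)∑‖εᵢ‖² = tr(Ψ(WWᵀ+Ψ)⁻¹Ψ) ≤ tr((WWᵀ+Ψ)⁻¹)·tr(Ψ)²`. -/
theorem stmt12 (m l n : ℕ) (hn : 0 < n)
    (v : Fin n → Fin m → ℝ) (μ : Fin n → Fin l → ℝ)
    (W : Matrix (Fin m) (Fin l) ℝ)
    (Ψ : Matrix (Fin m) (Fin m) ℝ) (hΨ : Ψ.PosDef)
    (Sig : Matrix (Fin l) (Fin l) ℝ)
    (hSig : Sig = ((1 : Matrix (Fin l) (Fin l) ℝ) + Wᵀ * Ψ⁻¹ * W)⁻¹)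
    (ε : Fin n → Fin m → ℝ) (hε : ∀ i, ε i = v i - W *ᵥ μ i)
    (hfix : (1 / (n : ℝ)) • ∑ i, Matrix.vecMulVec (ε i) (ε i) + W * Sig * Wᵀ = Ψ) :
    (1 / (n : ℝ)) * ∑ i, ∑ k, (ε i k) ^ 2 =
        (Ψ * (W * Wᵀ + Ψ)⁻¹ * Ψ).trace ∧
    (Ψ * (W * Wᵀ + Ψ)⁻¹ * Ψ).trace ≤ ((W * Wᵀ + Ψ)⁻¹).trace * Ψ.trace ^ 2 :=
  stmt12_general m l n W Ψ hΨ Sig hSig ε hfix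
end
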